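/- arXiv:1504.03368 — 6 statements merged into one kernel-verified Lean document; each statement's English description precedes it below -/
import Mathlib

section
/- The polynomial p(t) = t⁴ + 3t² + 1 is irreducible in the polynomial ring ℚ(ζ₇)[t]. -/
/-!
Over any domain, `X⁴ + cX² + 1` has a linear factor only if `c² - 4` is a square, and comparing
coefficients shows that it is a product of two monic quadratics only if `c² - 4`, `2 - c` or
`-2 - c` is a square; for `c = 3` these are `5`, `-1` and `-5`.

A rational `c` is a square in `ℚ(ζ₇)` only if `c` or `-7c` is a square in `ℚ`. Indeed
`σ : ζ ↦ ζ³` generates the Galois group, so its fixed field is `ℚ`, and it negates the Gauss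
sum `g`, with `g² = -7`. A square root `x` of `c` satisfies `σ x = ± x`, so `x` or `x g` is
rational.
-/

open Polynomial IsCyclotomicExtension

section Biquadratic

variable {R : Type*}

theorem Polynomial.Monic.eq_X_sq_add_C_mul_X_add_C [CommSemiring R] {p : R[X]} (hp : p.Monic)
    (h : p.natDegree = 2) : p = X ^ 2 + C (p.coeff 1) * X + C (p.coeff 0) := by
  have hlead : p.coeff 2 = 1 := h ▸ hp.coeff_natDegree
  conv_lhs => rw [p.as_sum_range_C_mul_X_pow, h]
  simp only [Finset.sum_range_succ, Finset.sum_range_zero, hlead, C_1]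
  ring

variable [CommRing R] [IsDomain R]

theorem isSquare_of_mul_eq_X_pow_four_add_C_mul_X_sq_add_one {a b u v c : R}
    (h : (X ^ 2 + C a * X + C b) * (X ^ 2 + C u * X + C v) = X ^ 4 + C c * X ^ 2 + 1) :
    IsSquare (c ^ 2 - 4) ∨ IsSquare (2 - c) ∨ IsSquare (-2 - c) := by
  have hexp : (X ^ 2 + C a * X + C b) * (X ^ 2 + C u * X + C v) =
      X ^ 4 + C (a + u) * X ^ 3 + C (b + v + a * u) * X ^ 2 + C (a * v + b * u) * X +
        C (b * v) := by
    simp only [map_add, map_mul]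
    ring
  rw [hexp] at h
  have hcoeff k := congrArg (coeff · k) h
  simp only [coeff_add, coeff_C_mul, coeff_X_pow, coeff_X, coeff_C, coeff_one] at hcoeff
  have e3 : a + u = 0 := by simpa using hcoeff 3
  have e2 : b + v + a * u = c := by simpa using hcoeff 2
  have e1 : a * v + b * u = 0 := by simpa using hcoeff 1
  have e0 : b * v = 1 := by simpa using hcoeff 0
  obtain rfl : u = -a := by linear_combination e3
  rcases mul_eq_zero.1 (show a * (v - b) = 0 by linear_combination e1) with rfl | hvb
  · left
    exact ⟨b - v, by linear_combination (-(b + v + c)) * e2 + 4 * e0⟩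
  · right
    rcases mul_eq_zero.1 (show (b - 1) * (b + 1) = 0 by linear_combination e0 - b * hvb)
      with hb | hb
    · exact Or.inl ⟨a, by linear_combination e2 - 2 * hb - hvb⟩
    · exact Or.inr ⟨a, by linear_combination e2 - 2 * hb - hvb⟩

theorem Polynomial.irreducible_X_pow_four_add_C_mul_X_sq_add_one {c : R}
    (h₁ : ¬IsSquare (c ^ 2 - 4)) (h₂ : ¬IsSquare (2 - c)) (h₃ : ¬IsSquare (-2 - c)) :
    Irreducible (X ^ 4 + C c * X ^ 2 + 1 : R[X]) := by
  have hmonic : (X ^ 4 + C c * X ^ 2 + 1 : R[X]).Monic := by monicity!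
  have hdeg : (X ^ 4 + C c * X ^ 2 + 1 : R[X]).natDegree = 4 := by compute_degree!
  rw [hmonic.irreducible_iff_natDegree', hdeg]
  refine ⟨fun h => by simp [h] at hdeg, fun f g hf hg hfg hg_deg => ?_⟩
  have hfg_deg : f.natDegree + g.natDegree = 4 := by rw [← hf.natDegree_mul hg, hfg, hdeg]
  obtain hg1 | hg2 : g.natDegree = 1 ∨ g.natDegree = 2 := by
    simp only [Finset.mem_Ioc] at hg_deg
    omega
  · rw [hg.eq_X_add_C hg1] at hfg
    generalize g.coeff 0 = a at hfg
    have hroot : (-a) ^ 4 + c * (-a) ^ 2 + 1 = 0 := by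
      simpa using (congrArg (eval (-a)) hfg).symm
    exact h₁ ⟨2 * a ^ 2 + c, by linear_combination -4 * hroot⟩
  · rw [hf.eq_X_sq_add_C_mul_X_add_C (by omega), hg.eq_X_sq_add_C_mul_X_add_C hg2] at hfg
    rcases isSquare_of_mul_eq_X_pow_four_add_C_mul_X_sq_add_one hfg with h | h | h
    exacts [h₁ h, h₂ h, h₃ h]

end Biquadratic

theorem AlgEquiv.isSquare_or_isSquare_mul_of_isSquare_algebraMap {F K : Type*} [Field F]
    [Field K] [Algebra F K] (σ : K ≃ₐ[F] K)
    (hfix : ∀ z, σ z = z → z ∈ Set.range (algebraMap F K)) {y : K} {d : F} (hσy : σ y = -y)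
    (hy : y ^ 2 = algebraMap F K d) {c : F} (hc : IsSquare (algebraMap F K c)) :
    IsSquare c ∨ IsSquare (d * c) := by
  obtain ⟨x, hx⟩ := hc
  have hσx : σ x * σ x = x * x := by rw [← map_mul, ← hx, σ.commutes]
  rcases mul_eq_zero.1 (show (σ x - x) * (σ x + x) = 0 by linear_combination hσx) with h | h
  · obtain ⟨q, rfl⟩ := hfix x (sub_eq_zero.1 h)
    exact Or.inl ⟨q, (algebraMap F K).injective (by rw [hx, map_mul])⟩
  · obtain ⟨q, hq⟩ := hfix (x * y) (by rw [map_mul, hσy, eq_neg_of_add_eq_zero_left h]; ring)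
    refine Or.inr ⟨q, (algebraMap F K).injective ?_⟩
    rw [map_mul, map_mul, hq]
    linear_combination algebraMap F K d * hx - x ^ 2 * hy

section GaussSumSeven

variable {R : Type*} [CommRing R]

/-- The quadratic Gauss sum `∑ (a/7) ζᵃ`, rewritten using `1 + ζ + ⋯ + ζ⁶ = 0`. -/
def gaussSumSeven (ζ : R) : R := 2 * (ζ + ζ ^ 2 + ζ ^ 4) + 1

theorem map_gaussSumSeven {S F : Type*} [CommRing S] [FunLike F R S] [RingHomClass F R S] (f : F)
    (ζ : R) : f (gaussSumSeven ζ) = gaussSumSeven (f ζ) := by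
  simp [gaussSumSeven, map_ofNat]

variable [IsDomain R] {ζ : R}

theorem IsPrimitiveRoot.geom_sum_seven_eq_zero (hζ : IsPrimitiveRoot ζ 7) :
    1 + ζ + ζ ^ 2 + ζ ^ 3 + ζ ^ 4 + ζ ^ 5 + ζ ^ 6 = 0 := by
  simpa [Finset.sum_range_succ] using hζ.geom_sum_eq_zero (by norm_num)

theorem IsPrimitiveRoot.gaussSumSeven_sq (hζ : IsPrimitiveRoot ζ 7) :
    gaussSumSeven ζ ^ 2 = -7 := by
  unfold gaussSumSeven
  linear_combination (4 * ζ) * hζ.pow_eq_one + 8 * hζ.geom_sum_seven_eq_zero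

theorem IsPrimitiveRoot.gaussSumSeven_pow_three (hζ : IsPrimitiveRoot ζ 7) :
    gaussSumSeven (ζ ^ 3) = -gaussSumSeven ζ := by
  unfold gaussSumSeven
  linear_combination (2 * ζ ^ 5) * hζ.pow_eq_one + 2 * hζ.geom_sum_seven_eq_zero

end GaussSumSeven

namespace CyclotomicField

-- Instance search elaborates the `ℚ`-algebra as `DivisionRing.toRatAlgebra`, and the library
-- instances do not unify with it at instance transparency.
instance isCyclotomicExtension_seven : IsCyclotomicExtension {7} ℚ (CyclotomicField 7 ℚ) :=
  isCyclotomicExtension 7 ℚ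

instance isGalois_seven : IsGalois ℚ (CyclotomicField 7 ℚ) :=
  IsCyclotomicExtension.isGalois {7} ℚ _

theorem irreducible_cyclotomic_seven : Irreducible (cyclotomic 7 ℚ) :=
  cyclotomic.irreducible_rat (by norm_num)

noncomputable def autSeven : CyclotomicField 7 ℚ ≃ₐ[ℚ] CyclotomicField 7 ℚ :=
  (autEquivPow _ irreducible_cyclotomic_seven).symm (ZMod.unitOfCoprime 3 (by norm_num))

theorem autSeven_zeta : autSeven (zeta 7 ℚ _) = zeta 7 ℚ (CyclotomicField 7 ℚ) ^ 3 := by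
  have hpow : (zeta_spec 7 ℚ (CyclotomicField 7 ℚ)).autToPow ℚ autSeven =
      ZMod.unitOfCoprime 3 (by norm_num) :=
    (autEquivPow _ irreducible_cyclotomic_seven).apply_symm_apply _
  rw [← (zeta_spec 7 ℚ _).autToPow_spec ℚ autSeven, hpow]
  rfl

theorem exists_eq_autSeven_pow (τ : CyclotomicField 7 ℚ ≃ₐ[ℚ] CyclotomicField 7 ℚ) :
    ∃ k : ℕ, τ = autSeven ^ k := by
  set e := autEquivPow (CyclotomicField 7 ℚ) irreducible_cyclotomic_seven
  obtain ⟨k, hk⟩ : ∃ k : Fin 6, e τ = ZMod.unitOfCoprime 3 (by norm_num) ^ (k : ℕ) := by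
    generalize e τ = u
    revert u
    decide
  exact ⟨k, by rw [autSeven, ← map_pow, ← hk, MulEquiv.symm_apply_apply]⟩

theorem mem_range_algebraMap_of_autSeven_apply_eq {z : CyclotomicField 7 ℚ}
    (hz : autSeven z = z) : z ∈ Set.range (algebraMap ℚ (CyclotomicField 7 ℚ)) := by
  refine (IsGalois.mem_range_algebraMap_iff_fixed z).2 fun τ => ?_
  obtain ⟨k, rfl⟩ := exists_eq_autSeven_pow τ
  rw [AlgEquiv.coe_pow, Function.iterate_fixed hz]

theorem not_isSquare_ratCast_seven {c : ℚ} (hc : ¬IsSquare c) (h7 : ¬IsSquare (-7 * c)) :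
    ¬IsSquare (c : CyclotomicField 7 ℚ) := by
  have hζ := zeta_spec 7 ℚ (CyclotomicField 7 ℚ)
  have hσ : autSeven (gaussSumSeven (zeta 7 ℚ _)) = -gaussSumSeven (zeta 7 ℚ _) := by
    rw [map_gaussSumSeven, autSeven_zeta, hζ.gaussSumSeven_pow_three]
  have hsq : gaussSumSeven (zeta 7 ℚ _) ^ 2 = algebraMap ℚ (CyclotomicField 7 ℚ) (-7) := by
    rw [hζ.gaussSumSeven_sq]
    simp
  rw [← eq_ratCast (algebraMap ℚ _) c]
  intro h
  rcases autSeven.isSquare_or_isSquare_mul_of_isSquare_algebraMap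
    (fun _ => mem_range_algebraMap_of_autSeven_apply_eq) hσ hsq h with h | h
  exacts [hc h, h7 h]

end CyclotomicField

/-- The polynomial `t⁴ + 3t² + 1` is irreducible in `ℚ(ζ₇)[t]`. -/
theorem stmt_0 :
    Irreducible ((X ^ 4 + 3 * X ^ 2 + 1 : Polynomial (CyclotomicField 7 ℚ))) := by
  have h₁ := CyclotomicField.not_isSquare_ratCast_seven (c := 5) (by norm_num) (by norm_num)
  have h₂ := CyclotomicField.not_isSquare_ratCast_seven (c := -1) (by norm_num) (by norm_num)
  have h₃ := CyclotomicField.not_isSquare_ratCast_seven (c := -5) (by norm_num) (by norm_num)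
  rw [← C_ofNat]
  refine irreducible_X_pow_four_add_C_mul_X_sq_add_one ?_ ?_ ?_ <;> norm_num at h₁ h₂ h₃ ⊢
  exacts [h₁, h₂, h₃]
end

section
/- Let x be an element of the 7th cyclotomic field ℚ(ζ₇) such that x² lies in ℚ (i.e., in the image of the structure map ℚ → ℚ(ζ₇)) but x itself does not lie in ℚ. Then there exists a nonzero rational number r with x² = −7·r². -/
/-!
With `ζ` a primitive 7th root of unity, the Gauss sum `g = 1 + 2 (ζ + ζ² + ζ⁴)` satisfies
`g² = -7`, so `g` is a square root of a rational number that is not itself rational.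
The Galois group of `ℚ(ζ₇)/ℚ` is cyclic, and a generator `σ` sends any such square root `y`
to `-y` (it sends it to `±y`, and `σ y = y` would make `y` fixed by the whole group).
Hence `σ (x / g) = x / g`, so `x = r g` with `r ∈ ℚ` and `x² = -7 r²`.
-/

open Polynomial

section CyclicGalois

variable {F E : Type*} [Field F] [Field E] [Algebra F E] [FiniteDimensional F E] [IsGalois F E]

theorem mem_range_algebraMap_of_generator_fixed {σ : Gal(E/F)}
    (hσ : ∀ τ : Gal(E/F), τ ∈ Subgroup.zpowers σ) {x : E} (hx : σ x = x) :
    x ∈ Set.range (algebraMap F E) := by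
  have hstab : Subgroup.zpowers σ ≤ MulAction.stabilizer Gal(E/F) x :=
    Subgroup.zpowers_le.mpr hx
  exact (IsGalois.mem_range_algebraMap_iff_fixed x).mpr fun τ => hstab (hσ τ)

theorem generator_apply_eq_neg_of_sq_mem_range {σ : Gal(E/F)}
    (hσ : ∀ τ : Gal(E/F), τ ∈ Subgroup.zpowers σ) {x : E}
    (hx2 : x ^ 2 ∈ Set.range (algebraMap F E)) (hx : x ∉ Set.range (algebraMap F E)) :
    σ x = -x := by
  obtain ⟨q, hq⟩ := hx2
  have hsq : σ x ^ 2 = x ^ 2 := by rw [← map_pow, ← hq, AlgEquiv.commutes]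
  exact (sq_eq_sq_iff_eq_or_eq_neg.mp hsq).resolve_left
    fun hfix => hx (mem_range_algebraMap_of_generator_fixed hσ hfix)

theorem div_mem_range_algebraMap_of_sq_mem_range [IsCyclic Gal(E/F)] {x y : E}
    (hx2 : x ^ 2 ∈ Set.range (algebraMap F E)) (hx : x ∉ Set.range (algebraMap F E))
    (hy2 : y ^ 2 ∈ Set.range (algebraMap F E)) (hy : y ∉ Set.range (algebraMap F E)) :
    x / y ∈ Set.range (algebraMap F E) := by
  obtain ⟨σ, hσ⟩ := IsCyclic.exists_generator (α := Gal(E/F))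
  refine mem_range_algebraMap_of_generator_fixed hσ ?_
  rw [map_div₀, generator_apply_eq_neg_of_sq_mem_range hσ hx2 hx,
    generator_apply_eq_neg_of_sq_mem_range hσ hy2 hy, neg_div_neg_eq]

end CyclicGalois

-- `1, 2, 4` are the nonzero squares modulo 7.
theorem IsPrimitiveRoot.one_add_two_mul_sum_sq_eq_neg_seven {R : Type*} [CommRing R] [IsDomain R]
    {ζ : R} (hζ : IsPrimitiveRoot ζ 7) : (1 + 2 * (ζ + ζ ^ 2 + ζ ^ 4)) ^ 2 = -7 := by
  have h7 : ζ ^ 7 = 1 := hζ.pow_eq_one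
  have hsum : ∑ i ∈ Finset.range 7, ζ ^ i = 0 := hζ.geom_sum_eq_zero (by norm_num)
  simp only [Finset.sum_range_succ, Finset.sum_range_zero] at hsum
  linear_combination 4 * ζ * h7 + 8 * hsum

theorem IsCyclotomicExtension.isCyclic_gal_rat_of_prime {p : ℕ} (hp : p.Prime) (L : Type*)
    [Field L] [CharZero L] [IsCyclotomicExtension {p} ℚ L] : IsCyclic Gal(L/ℚ) :=
  have : NeZero p := ⟨hp.ne_zero⟩
  (autEquivPow L (cyclotomic.irreducible_rat hp.pos)).isCyclic.mpr (ZMod.isCyclic_units_prime hp)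

-- The library instance is stated for `CyclotomicField.algebra`, but the `ℚ`-algebra structure
-- found by instance search is `DivisionRing.toRatAlgebra`, which is not reducibly equal to it.
instance : IsCyclotomicExtension {7} ℚ (CyclotomicField 7 ℚ) :=
  CyclotomicField.isCyclotomicExtension 7 ℚ

instance : IsGalois ℚ (CyclotomicField 7 ℚ) :=
  IsCyclotomicExtension.isGalois {7} ℚ _

instance : IsCyclic Gal(CyclotomicField 7 ℚ/ℚ) :=
  IsCyclotomicExtension.isCyclic_gal_rat_of_prime (p := 7) (by norm_num) _

/-- If `x ∈ ℚ(ζ₇)` has `x² ∈ ℚ` but `x ∉ ℚ`, then `x² = -7·r²` for some nonzero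
rational `r`. -/
theorem stmt_7 (x : CyclotomicField 7 ℚ)
    (hsq : x ^ 2 ∈ Set.range (algebraMap ℚ (CyclotomicField 7 ℚ)))
    (hx : x ∉ Set.range (algebraMap ℚ (CyclotomicField 7 ℚ))) :
    ∃ r : ℚ, r ≠ 0 ∧ x ^ 2 = -7 * (algebraMap ℚ (CyclotomicField 7 ℚ) r) ^ 2 := by
  obtain ⟨g, hg⟩ : ∃ g : CyclotomicField 7 ℚ, g ^ 2 = -7 :=
    ⟨_, (IsCyclotomicExtension.zeta_spec 7 ℚ _).one_add_two_mul_sum_sq_eq_neg_seven⟩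
  have hg_irrat : g ∉ Set.range (algebraMap ℚ (CyclotomicField 7 ℚ)) := by
    rintro ⟨q, rfl⟩
    have hq : q ^ 2 = -7 := by
      apply (algebraMap ℚ (CyclotomicField 7 ℚ)).injective
      simpa using hg
    nlinarith [sq_nonneg q]
  obtain ⟨r, hr⟩ := div_mem_range_algebraMap_of_sq_mem_range hsq hx ⟨-7, by simp [hg]⟩ hg_irrat
  have hxr : x = algebraMap ℚ _ r * g := by
    rw [hr, div_mul_cancel₀ _ (by rintro rfl; simp at hg)]
  refine ⟨r, ?_, by rw [hxr, mul_pow, hg]; ring⟩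
  rintro rfl
  exact hx ⟨0, by simp [hxr]⟩
end

section
/- Let n be a natural number, let B₁ and B₂ be n×n integer matrices, and let A be the 2n×2n block matrix [[0, B₁], [B₂, 0]]. Then there exists an abelian group G such that the cokernel ℤ^{2n}/(A + Aᵀ)ℤ^{2n} of the symmetric matrix A + Aᵀ (acting as a linear map ℤ^{2n} → ℤ^{2n}) is isomorphic to the direct sum G ⊕ G. -/
/-!
Writing `C = B₁ + B₂ᵀ`, the symmetrised matrix is `A + Aᵀ = [[0, C], [Cᵀ, 0]]`, whose cokernel
is `coker C × coker Cᵀ`. Over a principal ideal domain a square matrix has a Smith normal form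
`C = P D Q` with `D` diagonal and `P`, `Q` invertible; then `Cᵀ = Qᵀ D Pᵀ`, so `C` and `Cᵀ` both
have cokernel `coker D`, and one can take `G = coker C`.
-/

open Matrix Module

theorem LinearMap.exists_basis_sum_of_surjective {R M P κ κ' : Type*} [Ring R]
    [AddCommGroup M] [Module R M] [AddCommGroup P] [Module R P] {g : M →ₗ[R] P}
    (hg : Function.Surjective g) (bK : Basis κ R (LinearMap.ker g)) (bP : Basis κ' R P) :
    ∃ b : Basis (κ ⊕ κ') R M, (∀ j, b (.inl j) = bK j) ∧ ∀ i, g (b (.inr i)) = bP i := by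
  have : Module.Projective R P := .of_basis bP
  obtain ⟨l, hl⟩ := Module.projective_lifting_property g LinearMap.id hg
  obtain ⟨e, he_inl, he_snd⟩ :=
    g.exact_subtype_ker_map.splitSurjectiveEquiv (LinearMap.ker g).injective_subtype ⟨l, hl⟩
  refine ⟨(bK.prod bP).map e.symm, fun j => ?_, fun i => ?_⟩
  · simpa [Basis.prod_apply] using (LinearMap.congr_fun he_inl (bK j)).symm
  · simpa [Basis.prod_apply] using LinearMap.congr_fun he_snd (e.symm (0, bP i))

theorem Function.Embedding.exists_equiv_extend_inr {α β ι : Type*} [Fintype α] [Fintype β]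
    [Fintype ι] (e : α ⊕ β ≃ ι) (f : β ↪ ι) : ∃ σ : α ⊕ β ≃ ι, ∀ b, σ (.inr b) = f b := by
  classical
  obtain ⟨g, hg⟩ := Set.MapsTo.exists_equiv_extend_of_card_eq (t := Finset.univ)
    (f := Sum.elim (e ∘ .inl) f) (s := Set.range .inr)
    (by simpa using Fintype.card_congr e) (fun _ _ => Finset.mem_coe.2 (Finset.mem_univ _))
    (by rintro _ ⟨a, rfl⟩ _ ⟨b, rfl⟩ h; simpa using f.injective h)
  exact ⟨g.trans (Equiv.subtypeUnivEquiv Finset.mem_univ), fun b => hg _ ⟨b, rfl⟩⟩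

theorem LinearMap.exists_basis_apply_eq_smul {R M N ι : Type*} [CommRing R] [IsDomain R]
    [IsPrincipalIdealRing R] [AddCommGroup M] [Module R M] [AddCommGroup N] [Module R N]
    [Fintype ι] (bM : Basis ι R M) (bN : Basis ι R N) (f : M →ₗ[R] N) :
    ∃ (b : Basis ι R M) (c : Basis ι R N) (w : ι → R), ∀ i, f (b i) = w i • c i := by
  obtain ⟨m, ⟨c, bR, femb, a, hsnf⟩⟩ := (LinearMap.range f).smithNormalForm bN
  obtain ⟨k, bK⟩ := (LinearMap.ker f.rangeRestrict).basisOfPid bM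
  obtain ⟨b, hb_inl, hb_inr⟩ := exists_basis_sum_of_surjective f.surjective_rangeRestrict bK bR
  obtain ⟨σ, hσ⟩ := femb.exists_equiv_extend_inr (b.indexEquiv bM)
  refine ⟨b.reindex σ, c, fun i => Sum.elim 0 a (σ.symm i), fun i => ?_⟩
  obtain ⟨x, rfl⟩ := σ.surjective i
  rcases x with j | j
  · have hj : f (bK j) = 0 := congrArg Subtype.val (bK j).2
    simp [hb_inl, hj]
  · calc f (b.reindex σ (σ (.inr j))) = bR j := by simpa using congrArg Subtype.val (hb_inr j)
      _ = a j • c (femb j) := hsnf j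
      _ = _ := by simp only [Equiv.symm_apply_apply, Sum.elim_inr]; rw [hσ]

noncomputable def Submodule.quotientProdEquiv {R X Y : Type*} [Ring R] [AddCommGroup X]
    [Module R X] [AddCommGroup Y] [Module R Y] (N : Submodule R X) (M : Submodule R Y) :
    ((X × Y) ⧸ N.prod M) ≃ₗ[R] (X ⧸ N) × (Y ⧸ M) :=
  (Submodule.quotEquivOfEq _ _ (by rw [LinearMap.ker_prodMap, ker_mkQ, ker_mkQ])).trans
    (LinearMap.quotKerEquivOfSurjective (N.mkQ.prodMap M.mkQ)
      ((mkQ_surjective N).prodMap (mkQ_surjective M)))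

namespace Matrix

variable {R : Type*} [CommRing R] {m n m' n' : Type*}
  [Fintype n] [DecidableEq n] [Fintype n'] [DecidableEq n']

abbrev cokernel (C : Matrix m n R) : Type _ :=
  (m → R) ⧸ LinearMap.range C.toLin'

theorem exists_eq_mul_diagonal_mul [IsDomain R] [IsPrincipalIdealRing R] (C : Matrix n n R) :
    ∃ (P Q : Matrix n n R) (w : n → R),
      IsUnit P.det ∧ IsUnit Q.det ∧ C = P * diagonal w * Q := by
  obtain ⟨b, c, w, hf⟩ :=
    (toLin' C).exists_basis_apply_eq_smul (Pi.basisFun R n) (Pi.basisFun R n)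
  have hdiag : LinearMap.toMatrix b c (toLin' C) = diagonal w := by
    ext i j
    rcases eq_or_ne i j with rfl | hij
    · simp [LinearMap.toMatrix_apply, hf]
    · simp [LinearMap.toMatrix_apply, hf, hij]
  refine ⟨(Pi.basisFun R n).toMatrix c, b.toMatrix (Pi.basisFun R n), w,
    isUnit_det_of_right_inverse (Basis.toMatrix_mul_toMatrix_flip _ _),
    isUnit_det_of_right_inverse (Basis.toMatrix_mul_toMatrix_flip _ _), ?_⟩
  rw [← hdiag, basis_toMatrix_mul_linearMap_toMatrix_mul_basis_toMatrix,
    LinearMap.toMatrix_eq_toMatrix', LinearMap.toMatrix'_toLin']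

noncomputable def cokernelMulEquiv [Fintype m] [DecidableEq m] {P : Matrix m m R}
    {Q : Matrix n n R} (hP : IsUnit P.det) (hQ : IsUnit Q.det) (D : Matrix m n R) :
    cokernel (P * D * Q) ≃ₗ[R] cokernel D := by
  refine (Submodule.Quotient.equiv _ _ (P.toLinearEquiv' (P.invertibleOfIsUnitDet hP)) ?_).symm
  have hQ_top : LinearMap.range Q.toLin' = ⊤ :=
    LinearMap.range_eq_top.2 (Q.toLinearEquiv' (Q.invertibleOfIsUnitDet hQ)).surjective
  rw [toLin'_mul, toLin'_mul, LinearMap.range_comp_of_range_eq_top _ hQ_top,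
    LinearMap.range_comp]
  rfl

theorem nonempty_cokernel_transpose_equiv [IsDomain R] [IsPrincipalIdealRing R]
    (C : Matrix n n R) : Nonempty (cokernel Cᵀ ≃ₗ[R] cokernel C) := by
  obtain ⟨P, Q, w, hP, hQ, rfl⟩ := exists_eq_mul_diagonal_mul C
  have hT : (P * diagonal w * Q)ᵀ = Qᵀ * diagonal w * Pᵀ := by
    simp [transpose_mul, Matrix.mul_assoc]
  rw [hT]
  exact ⟨(cokernelMulEquiv (by rwa [det_transpose]) (by rwa [det_transpose]) _).trans
    (cokernelMulEquiv hP hQ _).symm⟩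

theorem toLin'_fromBlocks_zero_zero (C : Matrix m n' R) (D : Matrix m' n R) :
    (LinearEquiv.sumArrowLequivProdArrow m m' R R).toLinearMap ∘ₗ toLin' (fromBlocks 0 C D 0) =
      (toLin' C).prodMap (toLin' D) ∘ₗ (LinearEquiv.prodComm R _ _).toLinearMap ∘ₗ
        (LinearEquiv.sumArrowLequivProdArrow n n' R R).toLinearMap := by
  refine LinearMap.ext fun x => Prod.ext (funext fun i => ?_) (funext fun i => ?_) <;>
    simp [LinearEquiv.sumArrowLequivProdArrow, Equiv.sumArrowEquivProdArrow, fromBlocks_mulVec]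

noncomputable def cokernelFromBlocksEquiv (C : Matrix m n' R) (D : Matrix m' n R) :
    cokernel (fromBlocks 0 C D 0) ≃ₗ[R] cokernel C × cokernel D := by
  refine (Submodule.Quotient.equiv _ _ (LinearEquiv.sumArrowLequivProdArrow m m' R R) ?_).trans
    (Submodule.quotientProdEquiv _ _)
  rw [← LinearMap.range_comp, toLin'_fromBlocks_zero_zero, LinearMap.range_comp_of_range_eq_top,
    LinearMap.range_prodMap]
  exact LinearMap.range_eq_top.2 ((LinearEquiv.prodComm R _ _).surjective.comp
    (LinearEquiv.sumArrowLequivProdArrow n n' R R).surjective)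

end Matrix

/-- If `A = [[0, B₁], [B₂, 0]]` is a hyperbolic integer matrix, then the cokernel
of `A + Aᵀ : ℤ^{2n} → ℤ^{2n}` is isomorphic to `G ⊕ G` for some abelian group `G`. -/
theorem stmt_8 (n : ℕ) (B₁ B₂ : Matrix (Fin n) (Fin n) ℤ) :
    ∃ (G : Type) (_ : AddCommGroup G),
      Nonempty
        (((Fin n ⊕ Fin n → ℤ) ⧸
            LinearMap.range
              (Matrix.toLin'
                (Matrix.fromBlocks 0 B₁ B₂ 0 + (Matrix.fromBlocks 0 B₁ B₂ 0)ᵀ)))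
          ≃+ G × G) := by
  set C := B₁ + B₂ᵀ
  have hA : fromBlocks 0 B₁ B₂ 0 + (fromBlocks 0 B₁ B₂ 0)ᵀ = fromBlocks 0 C Cᵀ 0 := by
    simp [C, fromBlocks_transpose, fromBlocks_add, add_comm]
  obtain ⟨e⟩ := nonempty_cokernel_transpose_equiv C
  refine ⟨cokernel C, inferInstance, ⟨?_⟩⟩
  rw [hA]
  exact ((cokernelFromBlocksEquiv C Cᵀ).trans ((LinearEquiv.refl ℤ _).prodCongr e)).toAddEquiv
end

section
/- Let n be a natural number, let B₁ and B₂ be n×n real matrices, let A denote the 2n×2n complex matrix with block form [[0, B₁], [B₂, 0]] (real entries viewed in ℂ), and let ω be a complex number with |ω| = 1. Then the matrix M = (1−ω)·A + (1−conj(ω))·Aᵀ is Hermitian, and the number of its eigenvalues (counted with multiplicity) that are strictly positive equals the number that are strictly negative; in particular its signature is zero. -/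
/-!
Since `A` is real, `Aᵀ = Aᴴ` and `M = X + Xᴴ` with `X = (1 - ω) • A`, so `M` is Hermitian.
Like `A` and `Aᵀ`, `M` has zero diagonal blocks, so conjugating it by the involution
`diag(1, -1)` gives `-M`. Hence `M` and `-M` have the same characteristic polynomial, the
spectrum of `M` is symmetric about `0`, and positive and negative eigenvalues pair off.
-/

open Matrix Polynomial ComplexConjugate

theorem Multiset.countP_pos_eq_countP_neg {s : Multiset ℝ} (h : s.map Neg.neg = s) :
    s.countP (0 < ·) = s.countP (· < 0) := by
  conv_lhs => rw [← h]
  rw [Multiset.countP_map]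
  simp [Multiset.countP_eq_card_filter]

namespace Matrix

variable {m n R 𝕜 : Type*} [Fintype m] [Fintype n] [DecidableEq m] [DecidableEq n]

theorem charpoly_conj_of_mul_self_eq_one [CommRing R] {D : Matrix m m R} (hD : D * D = 1)
    (M : Matrix m m R) : (D * M * D).charpoly = M.charpoly := by
  rw [charpoly_mul_comm, ← mul_assoc, hD, one_mul]

theorem charpoly_neg_fromBlocks_zero_zero [CommRing R] (B : Matrix m n R) (C : Matrix n m R) :
    (-fromBlocks 0 B C 0).charpoly = (fromBlocks 0 B C 0).charpoly := by
  have hD : fromBlocks (1 : Matrix m m R) 0 0 (-1 : Matrix n n R) * fromBlocks 1 0 0 (-1) = 1 := by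
    simp [fromBlocks_multiply, ← fromBlocks_one]
  rw [← charpoly_conj_of_mul_self_eq_one hD]
  simp [fromBlocks_multiply, fromBlocks_neg]

variable [RCLike 𝕜]

theorem IsHermitian.charpoly_neg {A : Matrix m m 𝕜} (hA : A.IsHermitian) :
    (-A).charpoly = ∏ i, (X - C (-(hA.eigenvalues i : 𝕜))) := by
  conv_lhs => rw [hA.spectral_theorem, ← map_neg, Unitary.conjStarAlgAut_apply,
    charpoly_mul_comm, ← mul_assoc, Unitary.coe_star_mul_self, one_mul, diagonal_neg,
    charpoly_diagonal]
  rfl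

theorem IsHermitian.map_neg_eigenvalues_of_charpoly_neg {A : Matrix m m 𝕜} (hA : A.IsHermitian)
    (h : (-A).charpoly = A.charpoly) :
    (Finset.univ.val.map hA.eigenvalues).map Neg.neg = Finset.univ.val.map hA.eigenvalues := by
  have hroots := congrArg Polynomial.roots h
  rw [hA.roots_charpoly_eq_eigenvalues, hA.charpoly_neg,
    roots_prod _ _ (Finset.prod_ne_zero_iff.mpr fun i _ => X_sub_C_ne_zero _)] at hroots
  apply Multiset.map_injective (RCLike.ofReal_injective (K := 𝕜))
  simpa [Multiset.map_map] using hroots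

theorem IsHermitian.card_eigenvalues_pos_eq_card_neg {A : Matrix m m 𝕜} (hA : A.IsHermitian)
    (h : (-A).charpoly = A.charpoly) :
    (Finset.univ.filter fun i => 0 < hA.eigenvalues i).card =
      (Finset.univ.filter fun i => hA.eigenvalues i < 0).card := by
  simpa [Multiset.countP_map, Finset.card_def, Finset.filter_val] using
    Multiset.countP_pos_eq_countP_neg (hA.map_neg_eigenvalues_of_charpoly_neg h)

end Matrix

theorem stmt_10_general (n : ℕ) (B₁ B₂ : Matrix (Fin n) (Fin n) ℝ) (ω : ℂ)
    (A : Matrix (Fin n ⊕ Fin n) (Fin n ⊕ Fin n) ℂ)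
    (hA : A = (Matrix.fromBlocks 0 B₁ B₂ 0).map Complex.ofReal)
    (M : Matrix (Fin n ⊕ Fin n) (Fin n ⊕ Fin n) ℂ)
    (hM : M = (1 - ω) • A + (1 - (starRingEnd ℂ) ω) • Aᵀ) :
    ∃ hHerm : M.IsHermitian,
      (Finset.univ.filter fun i => 0 < hHerm.eigenvalues i).card =
        (Finset.univ.filter fun i => hHerm.eigenvalues i < 0).card := by
  have hAH : Aᴴ = Aᵀ := by
    subst hA
    ext i j
    simp
  have hHerm : M.IsHermitian := by
    have hM' : M = (1 - ω) • A + ((1 - ω) • A)ᴴ := by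
      rw [hM, conjTranspose_smul, hAH]
      simp
    exact hM' ▸ isHermitian_add_transpose_self _
  have hBlocks : M = fromBlocks 0
      ((1 - ω) • B₁.map (↑) + (1 - conj ω) • (B₂.map (↑))ᵀ)
      ((1 - ω) • B₂.map (↑) + (1 - conj ω) • (B₁.map (↑))ᵀ) 0 := by
    rw [hM, hA, fromBlocks_map, fromBlocks_transpose, fromBlocks_smul, fromBlocks_smul,
      fromBlocks_add]
    simp
  refine ⟨hHerm, hHerm.card_eigenvalues_pos_eq_card_neg ?_⟩
  rw [hBlocks]
  exact charpoly_neg_fromBlocks_zero_zero _ _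

/-- For a hyperbolic real matrix `A = [[0,B₁],[B₂,0]]` (viewed in `ℂ`) and a unit
complex number `ω`, the matrix `M = (1-ω)A + (1-ω̄)Aᵀ` is Hermitian and has as many
strictly positive eigenvalues as strictly negative ones (with multiplicity); in
particular its signature is zero. -/
theorem stmt_10 (n : ℕ) (B₁ B₂ : Matrix (Fin n) (Fin n) ℝ) (ω : ℂ) (hω : ‖ω‖ = 1)
    (A : Matrix (Fin n ⊕ Fin n) (Fin n ⊕ Fin n) ℂ)
    (hA : A = (Matrix.fromBlocks 0 B₁ B₂ 0).map Complex.ofReal)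
    (M : Matrix (Fin n ⊕ Fin n) (Fin n ⊕ Fin n) ℂ)
    (hM : M = (1 - ω) • A + (1 - (starRingEnd ℂ) ω) • Aᵀ) :
    ∃ hHerm : M.IsHermitian,
      (Finset.univ.filter fun i => 0 < hHerm.eigenvalues i).card =
        (Finset.univ.filter fun i => hHerm.eigenvalues i < 0).card :=
  stmt_10_general n B₁ B₂ ω A hA M hM
end

section
/- Let ζ be a primitive 7th root of unity generating the cyclotomic field ℚ(ζ₇). The polynomial t⁴ + (4 + ζ + ζ² + ζ⁴)·t³ + 3t² + (3 − ζ − ζ² − ζ⁴)·t + 1 is irreducible in the polynomial ring ℚ(ζ₇)[t]. -/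
/-!
By Gauss's lemma it suffices to prove irreducibility over the ring of integers `ℤ[ζ]`, and for a
monic polynomial it suffices to prove it after reduction modulo a prime. The prime `43 ≡ 1 mod 7`
splits completely in `ℤ[ζ]`; since `4` has order `7` modulo `43`, there is a ring map
`ℤ[ζ] → 𝔽₄₃` with `ζ ↦ 4`. It sends the polynomial to `t⁴ + 22t³ + 3t² + 28t + 1`, which has
no root in `𝔽₄₃` and is not a product of two monic quadratics, by exhaustive search.
-/

open Polynomial NumberField

namespace Polynomial

section CommRing

variable {R : Type*} [CommRing R]

theorem Monic.eq_X_sq_add_C_mul_X_add_C_s17 {p : R[X]} (hm : p.Monic) (hd : p.natDegree = 2) :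
    p = X ^ 2 + C (p.coeff 1) * X + C (p.coeff 0) := by
  ext n
  rcases n with _ | _ | _ | n
  · simp
  · simp
  · simpa [coeff_X_pow, hd] using hm.coeff_natDegree
  · rw [coeff_eq_zero_of_natDegree_lt (by omega)]
    simp [coeff_X_pow]

theorem X_sq_add_C_mul_X_add_C_mul (a b c d : R) :
    (X ^ 2 + C a * X + C b) * (X ^ 2 + C c * X + C d) =
      X ^ 4 + C (a + c) * X ^ 3 + C (b + d + a * c) * X ^ 2 + C (a * d + b * c) * X
        + C (b * d) := by
  simp only [C_add, C_mul]
  ring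

theorem Monic.irreducible_of_natDegree_eq_four [NoZeroDivisors R] {p : R[X]} (hm : p.Monic)
    (hd : p.natDegree = 4) (hroot : ∀ x, ¬ p.IsRoot x)
    (hquad : ∀ a b c d : R, a + c = p.coeff 3 → b + d + a * c = p.coeff 2 →
      a * d + b * c = p.coeff 1 → b * d = p.coeff 0 → False) :
    Irreducible p := by
  refine hm.irreducible_iff_natDegree'.2 ⟨fun h => by simp [h] at hd, ?_⟩
  intro f g hf hg hfg hdeg
  rw [hd, Finset.mem_Ioc] at hdeg
  obtain hg1 | hg2 : g.natDegree = 1 ∨ g.natDegree = 2 := by omega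
  · refine hroot (-g.coeff 0) ?_
    rw [← dvd_iff_isRoot, map_neg, sub_neg_eq_add, ← hg.eq_X_add_C hg1]
    exact Dvd.intro_left f hfg
  · have hf2 : f.natDegree = 2 := by
      have := hf.natDegree_mul hg
      rw [hfg] at this
      omega
    rw [hf.eq_X_sq_add_C_mul_X_add_C_s17 hf2, hg.eq_X_sq_add_C_mul_X_add_C_s17 hg2,
      X_sq_add_C_mul_X_add_C_mul] at hfg
    subst hfg
    refine hquad (f.coeff 1) (f.coeff 0) (g.coeff 1) (g.coeff 0) ?_ ?_ ?_ ?_ <;>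
      simp only [coeff_add, coeff_C_mul, coeff_X_pow, coeff_X, coeff_C] <;> norm_num

end CommRing

end Polynomial

section TwistedAlexander

variable {R S : Type*} [CommRing R] [CommRing S]

noncomputable def twistedAlexander12n318 (z : R) : R[X] :=
  X ^ 4 + C (4 + z + z ^ 2 + z ^ 4) * X ^ 3 + 3 * X ^ 2 + C (3 - z - z ^ 2 - z ^ 4) * X + 1

theorem map_twistedAlexander12n318 (f : R →+* S) (z : R) :
    (twistedAlexander12n318 z).map f = twistedAlexander12n318 (f z) := by
  simp only [twistedAlexander12n318, Polynomial.map_add, Polynomial.map_sub, Polynomial.map_mul,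
    Polynomial.map_pow, map_X, map_C, Polynomial.map_one, Polynomial.map_ofNat, map_add, map_sub,
    map_pow, map_ofNat]

theorem monic_twistedAlexander12n318 (z : R) : (twistedAlexander12n318 z).Monic := by
  unfold twistedAlexander12n318
  monicity!

theorem natDegree_twistedAlexander12n318 [Nontrivial R] (z : R) :
    (twistedAlexander12n318 z).natDegree = 4 := by
  unfold twistedAlexander12n318
  compute_degree!

theorem eval_twistedAlexander12n318 (z x : R) :
    (twistedAlexander12n318 z).eval x =
      x ^ 4 + (4 + z + z ^ 2 + z ^ 4) * x ^ 3 + 3 * x ^ 2 + (3 - z - z ^ 2 - z ^ 4) * x + 1 := by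
  simp [twistedAlexander12n318]

theorem coeff_twistedAlexander12n318 (z : R) :
    (twistedAlexander12n318 z).coeff 3 = 4 + z + z ^ 2 + z ^ 4 ∧
      (twistedAlexander12n318 z).coeff 2 = 3 ∧
      (twistedAlexander12n318 z).coeff 1 = 3 - z - z ^ 2 - z ^ 4 ∧
      (twistedAlexander12n318 z).coeff 0 = 1 := by
  simp only [twistedAlexander12n318, coeff_add, coeff_C_mul, coeff_ofNat_mul, coeff_X_pow,
    coeff_X, coeff_one]
  norm_num

end TwistedAlexander

instance Nat.fact_prime_43 : Fact (Nat.Prime 43) := ⟨by norm_num⟩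

theorem irreducible_twistedAlexander12n318_four_zmod_43 :
    Irreducible (twistedAlexander12n318 (4 : ZMod 43)) := by
  refine (monic_twistedAlexander12n318 _).irreducible_of_natDegree_eq_four
    (natDegree_twistedAlexander12n318 _) ?_ ?_
  · intro x
    rw [IsRoot.def, eval_twistedAlexander12n318]
    revert x
    decide
  · obtain ⟨h3, h2, h1, h0⟩ := coeff_twistedAlexander12n318 (4 : ZMod 43)
    rintro a b c d e3 e2 e1 e0
    rw [h3] at e3
    rw [h2] at e2
    rw [h1] at e1
    rw [h0] at e0
    -- `c` and `d` are determined linearly by `a` and `b`, leaving a search over `43²` pairs.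
    obtain rfl : c = 4 + 4 + 4 ^ 2 + 4 ^ 4 - a := by rw [← e3]; ring
    obtain rfl : d = 3 - a * (4 + 4 + 4 ^ 2 + 4 ^ 4 - a) - b := by rw [← e2]; ring
    revert a b
    decide

theorem isRoot_cyclotomic_seven_four_zmod_43 : (cyclotomic 7 (ZMod 43)).IsRoot 4 := by
  have : Fact (Nat.Prime 7) := ⟨by norm_num⟩
  rw [IsRoot.def, cyclotomic_prime, eval_geom_sum]
  decide

namespace IsPrimitiveRoot

variable {n : ℕ} [NeZero n] {K : Type*} [Field K] [CharZero K] {ζ : K}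

theorem minpoly_toInteger_eq_cyclotomic (hζ : IsPrimitiveRoot ζ n) :
    minpoly ℤ hζ.toInteger = cyclotomic n ℤ := by
  rw [cyclotomic_eq_minpoly hζ (NeZero.pos n),
    ← minpoly.algebraMap_eq RingOfIntegers.coe_injective]
  rfl

theorem exists_ringHom_toInteger_eq [IsCyclotomicExtension {n} ℚ K] (hζ : IsPrimitiveRoot ζ n)
    {A : Type*} [CommRing A] {x : A} (hx : (cyclotomic n A).IsRoot x) :
    ∃ φ : 𝓞 K →+* A, φ hζ.toInteger = x := by
  have hgen := hζ.integralPowerBasis_gen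
  have haeval : aeval x (minpoly ℤ hζ.integralPowerBasis.gen) = 0 := by
    rwa [hgen, hζ.minpoly_toInteger_eq_cyclotomic, aeval_def, eval₂_eq_eval_map,
      map_cyclotomic]
  exact ⟨hζ.integralPowerBasis.lift x haeval, hgen ▸ hζ.integralPowerBasis.lift_gen x haeval⟩

end IsPrimitiveRoot

/-- For `ζ` a primitive 7th root of unity in `ℚ(ζ₇)`, the polynomial
`t⁴ + (4 + ζ + ζ² + ζ⁴)t³ + 3t² + (3 - ζ - ζ² - ζ⁴)t + 1` is irreducible
in `ℚ(ζ₇)[t]`. -/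
theorem stmt_17 (ζ : CyclotomicField 7 ℚ) (hζ : IsPrimitiveRoot ζ 7) :
    Irreducible
      (X ^ 4 + C (4 + ζ + ζ ^ 2 + ζ ^ 4) * X ^ 3 + 3 * X ^ 2 +
        C (3 - ζ - ζ ^ 2 - ζ ^ 4) * X + 1 :
        Polynomial (CyclotomicField 7 ℚ)) := by
  -- The registered instance uses `CyclotomicField`'s own `ℚ`-algebra structure, which is not
  -- reducibly equal to the one of a characteristic-zero field that the lemmas expect.
  have : IsCyclotomicExtension {7} ℚ (CyclotomicField 7 ℚ) :=
    CyclotomicField.isCyclotomicExtension 7 ℚ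
  obtain ⟨φ, hφ⟩ := hζ.exists_ringHom_toInteger_eq isRoot_cyclotomic_seven_four_zmod_43
  have hmonic := monic_twistedAlexander12n318 hζ.toInteger
  have hirr : Irreducible (twistedAlexander12n318 hζ.toInteger) :=
    hmonic.irreducible_of_irreducible_map φ _ <| by
      rw [map_twistedAlexander12n318, hφ]
      exact irreducible_twistedAlexander12n318_four_zmod_43
  rw [hmonic.irreducible_iff_irreducible_map_fraction_map (K := CyclotomicField 7 ℚ),
    map_twistedAlexander12n318] at hirr
  exact hirr
end

section
/- Let ζ be a primitive 7th root of unity generating the cyclotomic field ℚ(ζ₇), and set s = ζ + ζ² + ζ⁴. The polynomial −29t⁴ + (−27 + 37s)·t³ + (17 + 68s)·t² + (48 + 47s)·t + (31 + 8s) is irreducible in the polynomial ring ℚ(ζ₇)[t]. -/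
/-!
The element `s = ζ + ζ² + ζ⁴` is a root of `s² + s + 2`, and the polynomial is `f = F₀ + s F₁`
with `F₀, F₁ ∈ ℤ[t]`. Multiplying `f` by its conjugate under `s ↦ -1 - s` gives
`F₀² - F₀ F₁ + 2 F₁² = 29 N` with `N ∈ ℤ[t]` primitive of degree 8. Modulo 3, `N` is a product of
two irreducible quartics, and modulo 13 of an irreducible quadratic and an irreducible sextic, so
a factor of `N` over `ℤ` has degree in `{0, 4, 8} ∩ {0, 2, 6, 8}` and `N` is irreducible over `ℚ`.
Hence a root of `f` has degree 8 over `ℚ`; if its degree over `ℚ(ζ₇)` is `d ≤ 4`, then `8 ∣ 6 d`,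
so `d = 4`.

Irreducibility modulo `p` is decided by reducing the polynomial, via Horner's rule, modulo every
monic polynomial of degree at most half its own.
-/

open Polynomial

section HornerMod

variable {F : Type*} [Field F]

/-- `hornerPoly [aₙ, …, a₁, a₀] = aₙ Xⁿ + ⋯ + a₁ X + a₀`. -/
noncomputable def hornerPoly (l : List F) : F[X] := l.foldl (fun P t => X * P + C t) 0

theorem natDegree_foldl_X_mul_add_C {P : F[X]} (hP : P ≠ 0) (l : List F) :
    (l.foldl (fun P t => X * P + C t) P).natDegree = P.natDegree + l.length := by
  induction l generalizing P with
  | nil => rfl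
  | cons t l ih =>
    have hdeg : (X * P + C t).natDegree = P.natDegree + 1 := by
      rw [natDegree_add_C, natDegree_X_mul hP]
    rw [List.foldl_cons, ih (ne_zero_of_natDegree_gt (n := 0) (by omega)), hdeg,
      List.length_cons]
    omega

theorem natDegree_hornerPoly_cons {a : F} (ha : a ≠ 0) (l : List F) :
    (hornerPoly (a :: l)).natDegree = l.length := by
  rw [hornerPoly, List.foldl_cons, mul_zero, zero_add,
    natDegree_foldl_X_mul_add_C (C_ne_zero.mpr ha), natDegree_C, zero_add]

variable [DecidableEq F] {n : ℕ}

/-- One step of Horner's rule modulo the monic `X ^ (n + 1) + ofFn (n + 1) g`: the remainder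
`ofFn (n + 1) r` of some `P` is sent to the remainder of `X * P + C t`. -/
def hornerModStep (g r : Fin (n + 1) → F) (t : F) : Fin (n + 1) → F :=
  Fin.cons t (Fin.init r) - r (Fin.last n) • g

theorem X_mul_ofFn_add_C (r : Fin (n + 1) → F) (t : F) :
    X * ofFn (n + 1) r + C t =
      ofFn (n + 1) (Fin.cons t (Fin.init r)) + C (r (Fin.last n)) * X ^ (n + 1) := by
  ext i
  rcases i with _ | j
  · simp
  · rw [coeff_add, coeff_add, coeff_X_mul, coeff_C, coeff_C_mul_X_pow]
    rcases lt_trichotomy j n with hj | rfl | hj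
    · simp [Nat.succ_lt_succ hj, hj.ne, Nat.lt_succ_of_lt hj]
      rfl
    · simp [Fin.last]
    · simp [hj.ne', ofFn_coeff_eq_zero_of_ge _ (by omega : n + 1 ≤ j),
        ofFn_coeff_eq_zero_of_ge _ (by omega : n + 1 ≤ j + 1)]

theorem X_mul_ofFn_add_C_eq_ofFn_hornerModStep (g r : Fin (n + 1) → F) (t : F) :
    X * ofFn (n + 1) r + C t =
      ofFn (n + 1) (hornerModStep g r t) + C (r (Fin.last n)) * (X ^ (n + 1) + ofFn (n + 1) g) := by
  rw [X_mul_ofFn_add_C, hornerModStep, map_sub, map_smul, smul_eq_C_mul]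
  ring

theorem dvd_foldl_sub_ofFn_foldl_hornerModStep (g : Fin (n + 1) → F) (l : List F) {P : F[X]}
    {r : Fin (n + 1) → F} (h : X ^ (n + 1) + ofFn (n + 1) g ∣ P - ofFn (n + 1) r) :
    X ^ (n + 1) + ofFn (n + 1) g ∣
      l.foldl (fun P t => X * P + C t) P - ofFn (n + 1) (l.foldl (hornerModStep g) r) := by
  induction l generalizing P r with
  | nil => exact h
  | cons t l ih =>
    refine ih ?_
    have hstep : X * P + C t - ofFn (n + 1) (hornerModStep g r t) =
        X * (P - ofFn (n + 1) r) + C (r (Fin.last n)) * (X ^ (n + 1) + ofFn (n + 1) g) := by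
      linear_combination X_mul_ofFn_add_C_eq_ofFn_hornerModStep g r t
    rw [hstep]
    exact dvd_add (h.mul_left X) (dvd_mul_left _ _)

theorem not_dvd_hornerPoly_of_foldl_ne_zero (g : Fin (n + 1) → F) {l : List F}
    (h : l.foldl (hornerModStep g) 0 ≠ 0) : ¬ X ^ (n + 1) + ofFn (n + 1) g ∣ hornerPoly l := by
  intro hdvd
  have hdeg : (X ^ (n + 1) + ofFn (n + 1) g).degree = ↑(n + 1) := by
    rw [degree_add_eq_left_of_degree_lt (by rw [degree_X_pow]; exact ofFn_degree_lt g),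
      degree_X_pow]
  have hrem : X ^ (n + 1) + ofFn (n + 1) g ∣ ofFn (n + 1) (l.foldl (hornerModStep g) 0) := by
    have := dvd_sub hdvd (dvd_foldl_sub_ofFn_foldl_hornerModStep g l (P := 0) (r := 0) (by simp))
    rwa [hornerPoly, sub_sub_cancel] at this
  refine h (injective_ofFn (n + 1) ?_)
  rw [map_zero]
  by_contra hne
  have := (degree_le_of_dvd hrem hne).trans_lt (ofFn_degree_lt _)
  rw [hdeg] at this
  exact lt_irrefl _ this

theorem Polynomial.Monic.eq_X_pow_add_ofFn {q : F[X]} (hq : q.Monic) (hd : q.natDegree = n + 1) :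
    q = X ^ (n + 1) + ofFn (n + 1) (toFn (n + 1) (q - X ^ (n + 1))) := by
  rw [ofFn_comp_toFn_eq_id_of_natDegree_lt, add_sub_cancel]
  exact IsMonicOfDegree.natDegree_sub_X_pow n.succ_ne_zero ⟨hd, hq⟩

theorem Polynomial.Monic.not_dvd_hornerPoly {q : F[X]} (hq : q.Monic) (hd : q.natDegree = n + 1)
    {l : List F} (h : ∀ g : Fin (n + 1) → F, l.foldl (hornerModStep g) 0 ≠ 0) :
    ¬ q ∣ hornerPoly l := by
  rw [hq.eq_X_pow_add_ofFn hd]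
  exact not_dvd_hornerPoly_of_foldl_ne_zero _ (h _)

theorem irreducible_hornerPoly_cons {a : F} (ha : a ≠ 0) {l : List F} (hl : l ≠ [])
    (h : ∀ n, n + 1 ≤ l.length / 2 →
      ∀ g : Fin (n + 1) → F, (a :: l).foldl (hornerModStep g) 0 ≠ 0) :
    Irreducible (hornerPoly (a :: l)) := by
  have hpos : 0 < (hornerPoly (a :: l)).natDegree := by
    rw [natDegree_hornerPoly_cons ha]
    exact List.length_pos_iff.mpr hl
  rw [irreducible_iff_lt_natDegree_lt (ne_zero_of_natDegree_gt hpos)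
    (fun hu => hpos.ne' (natDegree_eq_zero_of_isUnit hu))]
  intro q hq hdeg
  rw [Finset.mem_Ioc, natDegree_hornerPoly_cons ha] at hdeg
  obtain ⟨n, hn⟩ := Nat.exists_eq_add_one.mpr hdeg.1
  exact hq.not_dvd_hornerPoly hn (h n (hn ▸ hdeg.2))

end HornerMod

section Factors

variable {F : Type*} [Field F]

theorem natDegree_eq_of_dvd_mul_of_irreducible {q r d : F[X]} (hq : Irreducible q)
    (hr : Irreducible r) (hd : d ∣ q * r) :
    d.natDegree = 0 ∨ d.natDegree = q.natDegree ∨ d.natDegree = r.natDegree ∨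
      d.natDegree = q.natDegree + r.natDegree := by
  by_cases hqd : q ∣ d
  · obtain ⟨e, rfl⟩ := hqd
    have he : e ∣ r := (mul_dvd_mul_iff_left hq.ne_zero).mp hd
    have he0 : e ≠ 0 := by rintro rfl; exact hr.ne_zero (zero_dvd_iff.mp he)
    rw [natDegree_mul hq.ne_zero he0]
    rcases hr.dvd_iff.mp he with hu | ha
    · simp [natDegree_eq_zero_of_isUnit hu]
    · simp [natDegree_eq_of_degree_eq (degree_eq_degree_of_associated ha)]
  · have hd' : d ∣ r := (hq.coprime_iff_not_dvd.mpr hqd).symm.dvd_of_dvd_mul_left hd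
    rcases hr.dvd_iff.mp hd' with hu | ha
    · simp [natDegree_eq_zero_of_isUnit hu]
    · simp [natDegree_eq_of_degree_eq (degree_eq_degree_of_associated ha)]

theorem natDegree_eq_of_dvd_of_map_eq_mul {R : Type*} [CommRing R] [IsDomain R] (φ : R →+* F)
    {P A : R[X]} {q r : F[X]} {u : F} (hP : φ P.leadingCoeff ≠ 0) (hu : u ≠ 0)
    (hmap : P.map φ = C u * (q * r)) (hq : Irreducible q) (hr : Irreducible r) (hA : A ∣ P) :
    A.natDegree = 0 ∨ A.natDegree = q.natDegree ∨ A.natDegree = r.natDegree ∨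
      A.natDegree = q.natDegree + r.natDegree := by
  obtain ⟨B, rfl⟩ := hA
  rw [leadingCoeff_mul, map_mul] at hP
  rw [← natDegree_map_of_leadingCoeff_ne_zero φ (left_ne_zero_of_mul hP)]
  refine natDegree_eq_of_dvd_mul_of_irreducible hq hr ?_
  rw [← (isUnit_C.mpr hu.isUnit).dvd_mul_left, ← hmap, Polynomial.map_mul]
  exact dvd_mul_right _ _

end Factors

theorem Polynomial.IsPrimitive.irreducible_of_forall_dvd {R : Type*} [CommRing R] [IsDomain R]
    {P : R[X]} (hP : P.IsPrimitive) (hpos : 0 < P.natDegree)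
    (h : ∀ A, A ∣ P → A.natDegree = 0 ∨ A.natDegree = P.natDegree) : Irreducible P := by
  have isUnit_of_natDegree_eq_zero : ∀ D, D ∣ P → D.natDegree = 0 → IsUnit D := by
    intro D hD h0
    rw [eq_C_of_natDegree_eq_zero h0] at hD ⊢
    exact isUnit_C.mpr (isPrimitive_iff_isUnit_of_C_dvd.mp hP _ hD)
  refine ⟨fun hu => hpos.ne' (natDegree_eq_zero_of_isUnit hu), fun {A B} hAB => ?_⟩
  have hP0 : P ≠ 0 := ne_zero_of_natDegree_gt hpos
  have hdeg : A.natDegree + B.natDegree = P.natDegree := by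
    rw [hAB, natDegree_mul (left_ne_zero_of_mul (hAB ▸ hP0)) (right_ne_zero_of_mul (hAB ▸ hP0))]
  rcases h A (hAB ▸ dvd_mul_right A B) with hA | hA
  · exact .inl (isUnit_of_natDegree_eq_zero A (hAB ▸ dvd_mul_right A B) hA)
  · exact .inr (isUnit_of_natDegree_eq_zero B (hAB ▸ dvd_mul_left B A) (by omega))

section FieldExtension

variable {k K : Type*} [Field k] [Field K] [Algebra k K] [FiniteDimensional k K]

open Module

theorem natDegree_dvd_finrank_mul_natDegree_of_dvd_map {N : k[X]} (hN : Irreducible N) {h : K[X]}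
    (hh : Irreducible h) (hhN : h ∣ N.map (algebraMap k K)) :
    N.natDegree ∣ finrank k K * h.natDegree := by
  have := Fact.mk hh
  let pb := AdjoinRoot.powerBasis hh.ne_zero
  have : FiniteDimensional K (AdjoinRoot h) := pb.finite
  have : FiniteDimensional k (AdjoinRoot h) := Module.Finite.trans K (AdjoinRoot h)
  have hroot : aeval (AdjoinRoot.root h) N = 0 := by
    rw [← aeval_map_algebraMap K, AdjoinRoot.aeval_eq, AdjoinRoot.mk_eq_zero]
    exact hhN
  rw [← AdjoinRoot.powerBasis_dim hh.ne_zero, ← pb.finrank, finrank_mul_finrank,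
    minpoly.Irreducible.eq_minpoly hN hroot, natDegree_C_mul (leadingCoeff_ne_zero.mpr hN.ne_zero)]
  exact minpoly.degree_dvd (Algebra.IsIntegral.isIntegral _)

theorem irreducible_of_dvd_map_of_irreducible {N : k[X]} (hN : Irreducible N) {f : K[X]}
    (hf : 0 < f.natDegree) (hfN : f ∣ N.map (algebraMap k K))
    (hdeg : ∀ d, 0 < d → d < f.natDegree → ¬ N.natDegree ∣ finrank k K * d) :
    Irreducible f := by
  have hf0 : f ≠ 0 := ne_zero_of_natDegree_gt hf
  obtain ⟨h, hh, hhf⟩ := WfDvdMonoid.exists_irreducible_factor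
    (fun hu => hf.ne' (natDegree_eq_zero_of_isUnit hu)) hf0
  have hle : h.natDegree ≤ f.natDegree := natDegree_le_of_dvd hhf hf0
  have heq : h.natDegree = f.natDegree := by
    by_contra hne
    exact hdeg _ hh.natDegree_pos (lt_of_le_of_ne hle hne)
      (natDegree_dvd_finrank_mul_natDegree_of_dvd_map hN hh (hhf.trans hfN))
  exact (associated_of_dvd_of_natDegree_le hhf hf0 heq.ge).irreducible hh

end FieldExtension

theorem IsPrimitiveRoot.gaussPeriod_seven_sq_add_add_two {R : Type*} [CommRing R] [IsDomain R]
    {ζ : R} (hζ : IsPrimitiveRoot ζ 7) :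
    (ζ + ζ ^ 2 + ζ ^ 4) ^ 2 + (ζ + ζ ^ 2 + ζ ^ 4) + 2 = 0 := by
  have hsum := hζ.geom_sum_eq_zero (by norm_num)
  simp only [Finset.sum_range_succ, Finset.sum_range_zero] at hsum
  linear_combination ζ * hζ.pow_eq_one + 2 * hsum

noncomputable def normPoly : ℤ[X] :=
  29 * X ^ 8 + 91 * X ^ 7 + 188 * X ^ 6 + 308 * X ^ 5 + 368 * X ^ 4 + 308 * X ^ 3 +
    188 * X ^ 2 + 91 * X + 29

theorem natDegree_normPoly : normPoly.natDegree = 8 := by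
  unfold normPoly; compute_degree!

theorem leadingCoeff_normPoly : normPoly.leadingCoeff = 29 := by
  rw [leadingCoeff, natDegree_normPoly]
  simp [normPoly, coeff_X_pow, coeff_X]

theorem normPoly_isPrimitive : normPoly.IsPrimitive := by
  refine isPrimitive_iff_isUnit_of_C_dvd.mpr fun r hr => isUnit_of_dvd_one ?_
  have h8 : r ∣ 29 := by
    simpa [normPoly, coeff_X_pow, coeff_X] using (C_dvd_iff_dvd_coeff r _).mp hr 8
  have h7 : r ∣ 91 := by
    simpa [normPoly, coeff_X_pow, coeff_X] using (C_dvd_iff_dvd_coeff r _).mp hr 7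
  simpa [show Int.gcd 29 91 = 1 by norm_num] using Int.dvd_coe_gcd h8 h7

theorem normPoly_map_zmod_three : normPoly.map (Int.castRingHom (ZMod 3)) =
    C 2 * (hornerPoly [1, 1, 1, 2, 2] * hornerPoly [1, 1, 2, 2, 2]) := by
  simp only [normPoly, hornerPoly, List.foldl, Polynomial.map_add, Polynomial.map_mul,
    Polynomial.map_pow, Polynomial.map_X, Polynomial.map_ofNat, map_ofNat C, map_one]
  ring_nf
  reduce_mod_char

instance fact_prime_thirteen : Fact (Nat.Prime 13) := ⟨by norm_num⟩

theorem normPoly_map_zmod_thirteen : normPoly.map (Int.castRingHom (ZMod 13)) =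
    C 3 * (hornerPoly [1, 8, 1] * hornerPoly [1, 5, 0, 11, 0, 5, 1]) := by
  simp only [normPoly, hornerPoly, List.foldl, Polynomial.map_add, Polynomial.map_mul,
    Polynomial.map_pow, Polynomial.map_X, Polynomial.map_ofNat, map_ofNat C, map_one, map_zero]
  ring_nf
  reduce_mod_char

theorem natDegree_of_dvd_normPoly_zmod_three {A : ℤ[X]} (hA : A ∣ normPoly) :
    A.natDegree = 0 ∨ A.natDegree = 4 ∨ A.natDegree = 8 := by
  have hq : Irreducible (hornerPoly [1, 1, 1, 2, 2] : (ZMod 3)[X]) :=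
    irreducible_hornerPoly_cons one_ne_zero (List.cons_ne_nil _ _) fun n hn => by
      obtain rfl | rfl : n = 0 ∨ n = 1 := by
        simp only [List.length_cons, List.length_nil] at hn; omega
      all_goals decide +kernel
  have hr : Irreducible (hornerPoly [1, 1, 2, 2, 2] : (ZMod 3)[X]) :=
    irreducible_hornerPoly_cons one_ne_zero (List.cons_ne_nil _ _) fun n hn => by
      obtain rfl | rfl : n = 0 ∨ n = 1 := by
        simp only [List.length_cons, List.length_nil] at hn; omega
      all_goals decide +kernel
  have := natDegree_eq_of_dvd_of_map_eq_mul _ (by rw [leadingCoeff_normPoly]; decide)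
    (by decide) normPoly_map_zmod_three hq hr hA
  simp only [natDegree_hornerPoly_cons one_ne_zero, List.length_cons, List.length_nil] at this
  omega

theorem natDegree_of_dvd_normPoly_zmod_thirteen {A : ℤ[X]} (hA : A ∣ normPoly) :
    A.natDegree = 0 ∨ A.natDegree = 2 ∨ A.natDegree = 6 ∨ A.natDegree = 8 := by
  have hq : Irreducible (hornerPoly [1, 8, 1] : (ZMod 13)[X]) :=
    irreducible_hornerPoly_cons one_ne_zero (List.cons_ne_nil _ _) fun n hn => by
      obtain rfl : n = 0 := by
        simp only [List.length_cons, List.length_nil] at hn; omega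
      decide +kernel
  have hr : Irreducible (hornerPoly [1, 5, 0, 11, 0, 5, 1] : (ZMod 13)[X]) :=
    irreducible_hornerPoly_cons one_ne_zero (List.cons_ne_nil _ _) fun n hn => by
      obtain rfl | rfl | rfl : n = 0 ∨ n = 1 ∨ n = 2 := by
        simp only [List.length_cons, List.length_nil] at hn; omega
      all_goals decide +kernel
  have := natDegree_eq_of_dvd_of_map_eq_mul _ (by rw [leadingCoeff_normPoly]; decide)
    (by decide) normPoly_map_zmod_thirteen hq hr hA
  simp only [natDegree_hornerPoly_cons one_ne_zero, List.length_cons, List.length_nil] at this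
  omega

theorem irreducible_normPoly : Irreducible normPoly :=
  normPoly_isPrimitive.irreducible_of_forall_dvd (by rw [natDegree_normPoly]; norm_num)
    fun A hA => by
      have h3 := natDegree_of_dvd_normPoly_zmod_three hA
      have h13 := natDegree_of_dvd_normPoly_zmod_thirteen hA
      rw [natDegree_normPoly]
      omega

theorem irreducible_normPoly_map_rat : Irreducible (normPoly.map (Int.castRingHom ℚ)) :=
  (IsPrimitive.Int.irreducible_iff_irreducible_map_cast normPoly_isPrimitive).mp
    irreducible_normPoly

theorem CyclotomicField.finrank_rat (n : ℕ) [NeZero n] :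
    Module.finrank ℚ (CyclotomicField n ℚ) = n.totient := by
  have : NeZero (n : ℚ) := ⟨Nat.cast_ne_zero.mpr (NeZero.ne n)⟩
  have : IsCyclotomicExtension {n} ℚ (CyclotomicField n ℚ) :=
    CyclotomicField.isCyclotomicExtension n ℚ
  exact IsCyclotomicExtension.finrank _ (cyclotomic.irreducible_rat (NeZero.pos n))

noncomputable def twistedAlexanderPoly {R : Type*} [CommRing R] (s : R) : R[X] :=
  C (-29 : R) * X ^ 4 + C (-27 + 37 * s) * X ^ 3 + C (17 + 68 * s) * X ^ 2 +
    C (48 + 47 * s) * X + C (31 + 8 * s)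

theorem twistedAlexanderPoly_mul_neg_one_sub {R : Type*} [CommRing R] {s : R}
    (hs : s ^ 2 + s + 2 = 0) :
    twistedAlexanderPoly s * twistedAlexanderPoly (-1 - s) =
      C 29 * normPoly.map (Int.castRingHom R) := by
  have hC : C s ^ 2 + C s + 2 = 0 := by simpa [map_ofNat C] using congrArg C hs
  simp only [twistedAlexanderPoly, normPoly, map_add, map_mul, map_sub, map_neg, map_one,
    map_ofNat C, Polynomial.map_add, Polynomial.map_mul, Polynomial.map_pow, Polynomial.map_X,
    Polynomial.map_ofNat]
  -- with the polynomial written as `F₀ + s F₁`, the two sides differ by `-(s² + s + 2) F₁²`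
  linear_combination (-(37 * X ^ 3 + 68 * X ^ 2 + 47 * X + 8) ^ 2) * hC

/-- For `ζ` a primitive 7th root of unity in `ℚ(ζ₇)` and `s = ζ + ζ² + ζ⁴`, the
polynomial `-29t⁴ + (-27 + 37s)t³ + (17 + 68s)t² + (48 + 47s)t + (31 + 8s)` is
irreducible in `ℚ(ζ₇)[t]`. -/
theorem stmt_19 (ζ : CyclotomicField 7 ℚ) (hζ : IsPrimitiveRoot ζ 7)
    (s : CyclotomicField 7 ℚ) (hs : s = ζ + ζ ^ 2 + ζ ^ 4) :
    Irreducible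
      (C (-29 : CyclotomicField 7 ℚ) * X ^ 4 + C (-27 + 37 * s) * X ^ 3 +
        C (17 + 68 * s) * X ^ 2 + C (48 + 47 * s) * X + C (31 + 8 * s)) := by
  show Irreducible (twistedAlexanderPoly s)
  have hs2 : s ^ 2 + s + 2 = 0 := hs ▸ hζ.gaussPeriod_seven_sq_add_add_two
  have hdeg : (twistedAlexanderPoly s).natDegree = 4 := by
    unfold twistedAlexanderPoly
    compute_degree!
  have hdvd : twistedAlexanderPoly s ∣
      (normPoly.map (Int.castRingHom ℚ)).map (algebraMap ℚ (CyclotomicField 7 ℚ)) := by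
    rw [Polynomial.map_map, RingHom.ext_int ((algebraMap ℚ _).comp _) (Int.castRingHom _),
      ← (isUnit_C.mpr (IsUnit.mk0 (29 : CyclotomicField 7 ℚ) (by norm_num))).dvd_mul_left,
      ← twistedAlexanderPoly_mul_neg_one_sub hs2]
    exact dvd_mul_right _ _
  refine irreducible_of_dvd_map_of_irreducible irreducible_normPoly_map_rat ?_ hdvd ?_
  · rw [hdeg]
    norm_num
  · rw [hdeg, natDegree_map_eq_of_injective (RingHom.injective_int _), natDegree_normPoly,
      CyclotomicField.finrank_rat, Nat.totient_prime (by norm_num)]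
    omega
end
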